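/- If 0 < r < 3, then sup_{x ≥ 0} E^x[ Z_1^{−r} ] < ∞, where Z is a Bessel process of order 3 and E^x denotes expectation for the process started at x. -/

import Mathlib

open MeasureTheory ProbabilityTheory Filter Set
open scoped ENNReal NNReal

noncomputable section

/-- A one-dimensional Brownian motion started at `x`: measurable in `ω`, a.s. continuous
paths, Gaussian increments, and independent increments. -/
def IsBrownianMotionFrom {Ω : Type*} [MeasureSpace Ω] (x : ℝ) (W : ℝ → Ω → ℝ) : Prop :=
  (∀ t : ℝ, Measurable (W t)) ∧
  (∀ᵐ ω ∂(ℙ : Measure Ω), W 0 ω = x) ∧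
  (∀ᵐ ω ∂(ℙ : Measure Ω), Continuous fun t => W t ω) ∧
  (∀ s t : ℝ, 0 ≤ s → s ≤ t →
    Measure.map (fun ω => W t ω - W s ω) ℙ = gaussianReal 0 (Real.toNNReal (t - s))) ∧
  (∀ (n : ℕ) (τ : ℕ → ℝ), Monotone τ → 0 ≤ τ 0 →
    iIndepFun
      (fun (i : Fin n) (ω : Ω) => W (τ (i + 1)) ω - W (τ i) ω) ℙ)

/-- A standard one-dimensional Brownian motion (started at 0). -/
def IsBrownianMotion {Ω : Type*} [MeasureSpace Ω] (W : ℝ → Ω → ℝ) : Prop :=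
  IsBrownianMotionFrom 0 W

/-- `L` is a jointly continuous version of the local times of `W`: for each `z`, `t`
the map `ω ↦ L z t ω` is measurable, a.s. `(z, t) ↦ L z t ω` is continuous and
nonnegative, and the occupation density formula holds. -/
def IsLocalTime {Ω : Type*} [MeasureSpace Ω] (W : ℝ → Ω → ℝ) (L : ℝ → ℝ → Ω → ℝ) : Prop :=
  (∀ z t : ℝ, Measurable (L z t)) ∧
  (∀ᵐ ω ∂(ℙ : Measure Ω), Continuous fun p : ℝ × ℝ => L p.1 p.2 ω) ∧
  (∀ᵐ ω ∂(ℙ : Measure Ω), ∀ z t : ℝ, 0 ≤ L z t ω) ∧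
  (∀ᵐ ω ∂(ℙ : Measure Ω), ∀ t : ℝ, 0 ≤ t → ∀ A : Set ℝ, MeasurableSet A →
    (∫ s in Set.Icc (0:ℝ) t, Set.indicator A (fun _ => (1:ℝ)) (W s ω)) = ∫ z in A, L z t ω)

/-- The inverse local time at 0: `T_r = inf { t > 0 : L⁰_t ≥ r }`. -/
def hitT {Ω : Type*} [MeasureSpace Ω] (L : ℝ → ℝ → Ω → ℝ) (r : ℝ) (ω : Ω) : ℝ :=
  sInf {t : ℝ | 0 < t ∧ r ≤ L 0 t ω}

/-- A three-dimensional Brownian motion started at `y ∈ ℝ³`: each coordinate process is a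
one-dimensional Brownian motion started at the corresponding coordinate of `y`, and the
three coordinate processes are independent. A Bessel process of order 3 started at
`x = ‖y‖` is then `Z_t = ‖X_t‖`. -/
def IsBrownianMotion3 {Ω : Type*} [MeasureSpace Ω] (y : EuclideanSpace ℝ (Fin 3))
    (X : ℝ → Ω → EuclideanSpace ℝ (Fin 3)) : Prop :=
  (∀ i : Fin 3, IsBrownianMotionFrom (y i) (fun t ω => X t ω i)) ∧
  iIndepFun
    (fun (i : Fin 3) (ω : Ω) => fun t : ℝ => X t ω i) ℙ

/-! The coordinates of `X 1` are independent `N(y i, 1)` variables, and the density of `N(m, 1)`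
is `(2π)^{-1/2} e^{-(x-m)²/2} ≤ 1`, so the law of `X 1` is dominated by Lebesgue measure on `ℝ³`
whatever the starting point `y`. Splitting at the unit sphere, `E ‖X 1‖^{-r}` is then at most
`∫_{‖x‖ ≤ 1} ‖x‖^{-r} dx + 1`, and this integral is finite because `r` is below the dimension. -/

open Metric Module

section RpowNegNorm

variable {E : Type*} [NormedAddCommGroup E] [MeasurableSpace E]

lemma lintegral_rpow_neg_norm_le_closedBall_add_one [OpensMeasurableSpace E] {μ ν : Measure E}
    [IsProbabilityMeasure ν] (hνμ : ν ≤ μ) {r : ℝ} (hr : 0 ≤ r) :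
    ∫⁻ x, ENNReal.ofReal (‖x‖ ^ (-r)) ∂ν
      ≤ ∫⁻ x in closedBall 0 1, ENNReal.ofReal (‖x‖ ^ (-r)) ∂μ + 1 := by
  rw [← lintegral_add_compl _ measurableSet_closedBall]
  refine add_le_add (lintegral_mono' (Measure.restrict_mono subset_rfl hνμ) le_rfl) ?_
  calc ∫⁻ x in (closedBall 0 1)ᶜ, ENNReal.ofReal (‖x‖ ^ (-r)) ∂ν
      ≤ ∫⁻ _ in (closedBall 0 1)ᶜ, 1 ∂ν := by
        refine setLIntegral_mono measurable_const fun x hx => ?_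
        have hx1 : 1 ≤ ‖x‖ := by
          simpa using (lt_of_not_ge (mem_closedBall_zero_iff.not.1 hx)).le
        exact ENNReal.ofReal_le_one.2 (Real.rpow_le_one_of_one_le_of_nonpos hx1 (by linarith))
    _ ≤ 1 := by simpa using prob_le_one

lemma lintegral_closedBall_rpow_neg_norm_lt_top [NormedSpace ℝ E] [FiniteDimensional ℝ E]
    [BorelSpace E] [Nontrivial E] (μ : Measure E) [μ.IsAddHaarMeasure] {r : ℝ}
    (hr : r < finrank ℝ E) (R : ℝ) :
    ∫⁻ x in closedBall 0 R, ENNReal.ofReal (‖x‖ ^ (-r)) ∂μ < ⊤ := by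
  have hloc : LocallyIntegrable (fun x : E => ‖x‖ ^ (-r)) μ :=
    locallyIntegrable_of_norm_le_rpow (C := 1) finrank_pos hr
      (ae_of_all _ fun x => by simp [abs_of_nonneg (Real.rpow_nonneg (norm_nonneg x) _)])
      (measurable_norm.pow_const (-r)).aestronglyMeasurable
  exact (hloc.integrableOn_isCompact (isCompact_closedBall 0 R)).lintegral_lt_top

end RpowNegNorm

lemma MeasureTheory.Measure.pi_mono {ι : Type*} [Fintype ι] {α : ι → Type*}
    [∀ i, MeasurableSpace (α i)] {μ ν : ∀ i, Measure (α i)} (h : ∀ i, μ i ≤ ν i) :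
    Measure.pi μ ≤ Measure.pi ν := by
  rw [Measure.le_iff]
  intro s hs
  simp only [Measure.pi_def, toMeasure_apply _ _ hs]
  refine OuterMeasure.le_pi.2 (fun t _ => ?_) s
  exact (OuterMeasure.pi_pi_le _ t).trans (Finset.prod_le_prod' fun i _ => h i (t i))

lemma ProbabilityTheory.gaussianPDFReal_le_one (m : ℝ) {v : ℝ≥0} (hv : 1 ≤ 2 * Real.pi * v)
    (x : ℝ) :
    gaussianPDFReal m v x ≤ 1 := by
  rw [gaussianPDFReal_def]
  refine mul_le_one₀ (inv_le_one_of_one_le₀ (Real.one_le_sqrt.2 hv)) (by positivity) ?_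
  rw [Real.exp_le_one_iff]
  exact div_nonpos_of_nonpos_of_nonneg (neg_nonpos.2 (sq_nonneg _)) (by positivity)

lemma ProbabilityTheory.gaussianReal_le_volume (m : ℝ) {v : ℝ≥0} (hv : 1 ≤ 2 * Real.pi * v) :
    gaussianReal m v ≤ volume := by
  have hv0 : v ≠ 0 := by
    rintro rfl
    norm_num at hv
  calc gaussianReal m v = volume.withDensity (gaussianPDF m v) := gaussianReal_of_var_ne_zero m hv0
    _ ≤ volume.withDensity 1 :=
      withDensity_mono <| ae_of_all _ fun x =>
        ENNReal.ofReal_le_one.2 (gaussianPDFReal_le_one m hv x)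
    _ = volume := withDensity_one

lemma map_toLp_pi_gaussianReal_le_volume {ι : Type*} [Fintype ι] (m : ι → ℝ) {v : ℝ≥0}
    (hv : 1 ≤ 2 * Real.pi * v) :
    (Measure.pi fun i => gaussianReal (m i) v).map (WithLp.toLp 2)
      ≤ (volume : Measure (EuclideanSpace ℝ ι)) :=
  calc (Measure.pi fun i => gaussianReal (m i) v).map (WithLp.toLp 2)
      ≤ (volume : Measure (ι → ℝ)).map (WithLp.toLp 2) :=
        Measure.map_mono (Measure.pi_mono fun i => gaussianReal_le_volume (m i) hv)
          (WithLp.measurable_toLp 2 _)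
    _ = volume := (PiLp.volume_preserving_toLp ι).map_eq

lemma IsBrownianMotionFrom.hasLaw {Ω : Type*} [MeasureSpace Ω] {x : ℝ} {W : ℝ → Ω → ℝ}
    (hW : IsBrownianMotionFrom x W) {t : ℝ} (ht : 0 ≤ t) :
    HasLaw (W t) (gaussianReal x t.toNNReal) ℙ := by
  obtain ⟨hmeas, hstart, -, hincr, -⟩ := hW
  have hinc : HasLaw (fun ω => W t ω - W 0 ω) (gaussianReal 0 t.toNNReal) ℙ :=
    ⟨((hmeas t).sub (hmeas 0)).aemeasurable, by simpa using hincr 0 t le_rfl ht⟩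
  have hshift := gaussianReal_add_const hinc x
  rw [zero_add] at hshift
  refine hshift.congr ?_
  filter_upwards [hstart] with ω h0
  simp [h0]

lemma IsBrownianMotion3.hasLaw {Ω : Type*} [MeasureSpace Ω] {y : EuclideanSpace ℝ (Fin 3)}
    {X : ℝ → Ω → EuclideanSpace ℝ (Fin 3)} (hX : IsBrownianMotion3 y X) {t : ℝ} (ht : 0 ≤ t) :
    HasLaw (X t) ((Measure.pi fun i => gaussianReal (y i) t.toNNReal).map (WithLp.toLp 2)) ℙ := by
  have hcoord : HasLaw (fun ω i => X t ω i) (Measure.pi fun i => gaussianReal (y i) t.toNNReal) ℙ :=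
    iIndepFun.hasLaw_pi (fun i => (hX.1 i).hasLaw ht)
      (hX.2.comp (fun _ p => p t) fun _ => measurable_pi_apply t)
  exact (HasLaw.mk (WithLp.measurable_toLp 2 _).aemeasurable rfl).comp hcoord

/-- Lemma 4.1: if `0 < r < 3`, then `sup_{x ≥ 0} E^x[ Z_1^{−r} ] < ∞` for the Bessel
process `Z` of order 3 (the modulus of a three-dimensional Brownian motion). -/
theorem bessel3_neg_moment_bounded (r : ℝ) (hr0 : 0 < r) (hr3 : r < 3) :
    ∃ C : ℝ≥0∞, C < ⊤ ∧
      ∀ (Ω : Type) (_ : MeasureSpace Ω), IsProbabilityMeasure (ℙ : Measure Ω) →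
        ∀ (y : EuclideanSpace ℝ (Fin 3)) (X : ℝ → Ω → EuclideanSpace ℝ (Fin 3)),
          IsBrownianMotion3 y X →
          ∫⁻ ω, ENNReal.ofReal (‖X 1 ω‖ ^ (-r)) ∂(ℙ : Measure Ω) ≤ C := by
  refine ⟨(∫⁻ x in closedBall (0 : EuclideanSpace ℝ (Fin 3)) 1, ENNReal.ofReal (‖x‖ ^ (-r))) + 1,
    ENNReal.add_lt_top.2 ⟨lintegral_closedBall_rpow_neg_norm_lt_top volume (by simpa) 1,
      ENNReal.one_lt_top⟩, ?_⟩
  intro Ω _ hP y X hX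
  have hlaw := hX.hasLaw zero_le_one
  have := hlaw.isProbabilityMeasure_iff.1 hP
  rw [hlaw.lintegral_comp (measurable_norm.pow_const (-r)).ennreal_ofReal.aemeasurable]
  refine lintegral_rpow_neg_norm_le_closedBall_add_one ?_ hr0.le
  exact map_toLp_pi_gaussianReal_le_volume _ (by
    rw [Real.toNNReal_one, NNReal.coe_one]
    nlinarith [Real.pi_gt_three])
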